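/- Let P be a completely positive map on M_n(ℂ) with Kraus decomposition P(a) = Σ_{r=1}^N t_r a t_r*. Define a sesquilinear form on ℂ^{n×n} (functions from pairs (i,j) to ℂ, identified with formal spans of symbols ε_{ij}) by ⟨ε_{ij}, ε_{kl}⟩ = (P(E_{ik}))_{jl}. Then this form is positive semidefinite, and the Hilbert space obtained by quotienting out the null space has complex dimension equal to dim span{t_1,...,t_N}. -/

import Mathlib

/-!
Writing `vec t` for the column-stacking of `t` (so `vec t (i, j) = t j i`), the Gram matrix
`G (i,j) (k,l) = Σ_r (t_r)_{ji} conj (t_r)_{lk}` factors as `A Aᴴ`, where `A` is the matrix whose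
`r`-th column is `vec t_r`. Hence `G` is positive semidefinite and
`rank G = rank A = dim span {vec t_r} = dim span {t_r}`, since `vec` is a linear isomorphism.
-/

open Matrix ComplexOrder

namespace Matrix

variable {m n ι R : Type*}

def vecLinearEquiv [Semiring R] : Matrix m n R ≃ₗ[R] (n × m → R) where
  toFun := vec
  map_add' := vec_add
  map_smul' := vec_smul
  invFun v := of fun i j => v (j, i)
  left_inv _ := rfl
  right_inv _ := rfl

theorem rank_transpose_of_vec [Fintype m] [Fintype n] [Fintype ι] [Field R]
    (t : ι → Matrix m n R) :
    (of fun r => (t r).vec)ᵀ.rank = Module.finrank R (Submodule.span R (Set.range t)) := by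
  rw [rank_eq_finrank_span_cols, ← (vecLinearEquiv (R := R)).finrank_map_eq, Submodule.map_span,
    ← Set.range_comp]
  rfl

theorem mul_single_one_mul_conjTranspose_apply [Fintype m] [DecidableEq m] [CommSemiring R]
    [StarRing R] (a b : Matrix m m R) (i k j l : m) :
    (a * single i k (1 : R) * bᴴ) j l = a j i * star (b l k) := by
  rw [mul_apply, Finset.sum_eq_single k
    (fun c _ hc => by simp [mul_single_apply_of_ne _ _ _ _ _ hc]) (by simp)]
  simp

theorem of_sum_mul_single_mul_conjTranspose_eq [Fintype m] [DecidableEq m] [Fintype ι]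
    [CommSemiring R] [StarRing R] (t : ι → Matrix m m R) :
    of (fun p q : m × m => (∑ r, t r * single p.1 q.1 (1 : R) * (t r)ᴴ) p.2 q.2) =
      (of fun r => (t r).vec)ᵀ * (of fun r => (t r).vec)ᵀᴴ := by
  ext p q
  simp only [of_apply, sum_apply, mul_single_one_mul_conjTranspose_apply]
  rfl

end Matrix

/-- For a completely positive map with Kraus decomposition
`P(a) = Σ_r t_r a t_r*`, the Gram matrix of the sesquilinear form
`⟨ε_{ij}, ε_{kl}⟩ = (P(E_{ik}))_{jl}` on `ℂ^{n×n}` is positive semidefinite,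
and the Hilbert space obtained by quotienting out the null space (whose
dimension is the rank of the Gram matrix) has dimension `dim span{t_r}`. -/
theorem stmt_6 {n N : ℕ}
    (P : Matrix (Fin n) (Fin n) ℂ →ₗ[ℂ] Matrix (Fin n) (Fin n) ℂ)
    (t : Fin N → Matrix (Fin n) (Fin n) ℂ)
    (ht : ∀ a : Matrix (Fin n) (Fin n) ℂ, P a = ∑ r, t r * a * (t r)ᴴ) :
    (Matrix.of fun p q : Fin n × Fin n =>
        P (Matrix.single p.1 q.1 (1 : ℂ)) p.2 q.2).PosSemidef ∧
    (Matrix.of fun p q : Fin n × Fin n =>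
        P (Matrix.single p.1 q.1 (1 : ℂ)) p.2 q.2).rank =
      Module.finrank ℂ (Submodule.span ℂ (Set.range t)) := by
  simp only [ht, of_sum_mul_single_mul_conjTranspose_eq]
  exact ⟨posSemidef_self_mul_conjTranspose _,
    (rank_self_mul_conjTranspose _).trans (rank_transpose_of_vec t)⟩
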